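/- For every integer g ≥ 11, the integer g² − 5g + 10 divides 2·(g³ − g) if and only if g = 15. Equivalently, for g ≥ 11 with g ≠ 15, the integer (g² − 5g + 10)/2 does not divide g³ − g. -/

import Mathlib

/-!
Division with remainder gives `2(g³ − g) = (2g + 10)(g² − 5g + 10) + (28g − 100)`, so the
divisibility amounts to `g² − 5g + 10 ∣ 28g − 100`. For `g ≥ 11` the remainder is positive, hence at
least the divisor, which forces `g ≤ 29`; among `11 ≤ g ≤ 29` only `g = 15` works. The second
statement follows because `g² − 5g + 10 = g(g − 1) − 2(2g − 5)` is even.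
-/

lemma two_dvd_sq_sub_five_mul_add_ten (g : ℤ) : 2 ∣ g ^ 2 - 5 * g + 10 := by
  have hrw : g ^ 2 - 5 * g + 10 = g * (g - 1) + 2 * (5 - 2 * g) := by ring
  rw [hrw]
  exact dvd_add (Int.even_mul_pred_self g).two_dvd (dvd_mul_right _ _)

lemma dvd_two_mul_cube_sub_self_iff (g : ℤ) :
    g ^ 2 - 5 * g + 10 ∣ 2 * (g ^ 3 - g) ↔ g ^ 2 - 5 * g + 10 ∣ 28 * g - 100 := by
  have hrw : 2 * (g ^ 3 - g) = (g ^ 2 - 5 * g + 10) * (2 * g + 10) + (28 * g - 100) := by ring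
  rw [hrw, dvd_add_right (dvd_mul_right _ _)]

lemma le_twentyNine_of_dvd (g : ℤ) (hg : 11 ≤ g) (h : g ^ 2 - 5 * g + 10 ∣ 28 * g - 100) :
    g ≤ 29 := by
  have hle := Int.le_of_dvd (by linarith) h
  nlinarith

lemma eq_fifteen_of_dvd (g : ℤ) (hg : 11 ≤ g) (h : g ^ 2 - 5 * g + 10 ∣ 28 * g - 100) :
    g = 15 := by
  have hg' := le_twentyNine_of_dvd g hg h
  interval_cases g <;> first | rfl | norm_num at h

/-- For an integer `g ≥ 11`, `g² − 5g + 10` divides `2(g³ − g)` if and only if `g = 15`;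
equivalently, for `g ≥ 11`, `g ≠ 15`, the integer `(g² − 5g + 10)/2` does not divide
`g³ − g`. -/
theorem bielliptic_weight_divisibility (g : ℤ) (hg : 11 ≤ g) :
    ((g ^ 2 - 5 * g + 10 ∣ 2 * (g ^ 3 - g)) ↔ g = 15) ∧
      (g ≠ 15 → ¬ ((g ^ 2 - 5 * g + 10) / 2 ∣ g ^ 3 - g)) := by
  have key : g ^ 2 - 5 * g + 10 ∣ 2 * (g ^ 3 - g) ↔ g = 15 := by
    rw [dvd_two_mul_cube_sub_self_iff]
    exact ⟨eq_fifteen_of_dvd g hg, by rintro rfl; norm_num⟩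
  refine ⟨key, fun hne hdvd => hne (key.mp ?_)⟩
  exact Int.dvd_mul_of_ediv_dvd (two_dvd_sq_sub_five_mul_add_ten g) hdvd
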